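/- Let S be an inverse semigroup with zero, and for a ∈ S let U_a be the set of proper filters of S containing a. Then: (1) U_0 = ∅; (2) U_a⁻¹ = U_{a⁻¹}; (3) U_a U_b = U_{ab} under the groupoid multiplication of proper filters; (4) each U_a is a partial bisection of the groupoid of proper filters; and (5) U_a ∩ U_b = ⋃_{x ≤ a,b} U_x. -/

import Mathlib

/-- An inverse semigroup with zero: associative multiplication, unique
generalized inverses, and a multiplicatively absorbing zero. -/
structure InvSemigroupZero (S : Type*) [Mul S] [Inv S] [Zero S] : Prop where
  mul_assoc : ∀ a b c : S, a * b * c = a * (b * c)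
  mul_inv_mul : ∀ a : S, a * a⁻¹ * a = a
  inv_mul_inv : ∀ a : S, a⁻¹ * a * a⁻¹ = a⁻¹
  inv_unique : ∀ a t : S, a * t * a = a → t * a * t = t → t = a⁻¹
  zero_mul : ∀ a : S, 0 * a = 0
  mul_zero : ∀ a : S, a * 0 = 0

def IsIdem {S : Type*} [Mul S] (e : S) : Prop := e * e = e

/-- The natural partial order: `s ≤ t` iff `s = t e` for some idempotent `e`. -/
def natLe {S : Type*} [Mul S] (s t : S) : Prop := ∃ e : S, IsIdem e ∧ s = t * e

/-- `s` and `t` are compatible iff `s⁻¹ t` and `s t⁻¹` are idempotents. -/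
def Compat {S : Type*} [Mul S] [Inv S] (s t : S) : Prop :=
  IsIdem (s⁻¹ * t) ∧ IsIdem (s * t⁻¹)

/-- Upward closure of a subset in the natural partial order. -/
def upc {S : Type*} [Mul S] (X : Set S) : Set S := {s | ∃ x ∈ X, natLe x s}

/-- A filter: nonempty, upward closed and downward directed. -/
def IsFilt {S : Type*} [Mul S] (A : Set S) : Prop :=
  A.Nonempty ∧ (∀ a ∈ A, ∀ s, natLe a s → s ∈ A) ∧
    ∀ a ∈ A, ∀ b ∈ A, ∃ c ∈ A, natLe c a ∧ natLe c b

/-- A proper filter: a filter not containing `0`. -/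
def IsPFilt {S : Type*} [Mul S] [Zero S] (A : Set S) : Prop := IsFilt A ∧ (0 : S) ∉ A

def dF {S : Type*} [Mul S] [Inv S] (A : Set S) : Set S :=
  upc {p | ∃ a ∈ A, ∃ b ∈ A, p = a⁻¹ * b}

def rF {S : Type*} [Mul S] [Inv S] (A : Set S) : Set S :=
  upc {p | ∃ a ∈ A, ∃ b ∈ A, p = a * b⁻¹}

def invF {S : Type*} [Inv S] (A : Set S) : Set S := Inv.inv '' A

def mulF {S : Type*} [Mul S] (A B : Set S) : Set S :=
  upc {p | ∃ a ∈ A, ∃ b ∈ B, p = a * b}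

/-- An ultrafilter: a maximal proper filter. -/
def IsUltraF {S : Type*} [Mul S] [Zero S] (A : Set S) : Prop :=
  IsPFilt A ∧ ∀ B : Set S, IsPFilt B → A ⊆ B → A = B

/-- `U_a`: the set of proper filters containing `a`. -/
def UU {S : Type*} [Mul S] [Zero S] (a : S) : Set (Set S) :=
  {A | IsPFilt A ∧ a ∈ A}

/-- Setwise product of two sets of proper filters under the groupoid
multiplication `A · B = (AB)↑`, defined when `d(A) = r(B)`. -/
def prodUU {S : Type*} [Mul S] [Inv S] (𝒜 ℬ : Set (Set S)) : Set (Set S) :=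
  {P | ∃ A ∈ 𝒜, ∃ B ∈ ℬ, dF A = rF B ∧ P = mulF A B}

/-!
Everything rests on the fact that idempotents of an inverse semigroup commute: it gives
`(ab)⁻¹ = b⁻¹a⁻¹` and makes the natural order compatible with products and inverses, so the upward
closure of a down-directed set avoiding `0` is a proper filter. For `U_{ab} ⊆ U_a U_b`, cut a
proper filter `P ∋ ab` down to `D = {r ∈ P | r ≤ ab}`: every `r ∈ D` satisfies `r = (rb⁻¹)(a⁻¹r)`
and `(a⁻¹r)(a⁻¹r)⁻¹ = (rb⁻¹)⁻¹(rb⁻¹)`, so `A = (Db⁻¹)↑` and `B = (a⁻¹D)↑` have `d(A) = r(B)` and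
`A · B = P`. The bisection property for `r` reduces to the one for `d` through `r(A) = d(A⁻¹)`.
-/

theorem IsPFilt.ne_zero {S : Type*} [Mul S] [Zero S] {P : Set S} (hP : IsPFilt P) {c : S}
    (hc : c ∈ P) : c ≠ 0 :=
  fun h => hP.2 (h ▸ hc)

theorem IsFilt.directedOn {S : Type*} [Mul S] {A : Set S} (hA : IsFilt A) :
    DirectedOn (flip natLe) A :=
  hA.2.2

theorem IsFilt.upc_setOf_natLe_eq {S : Type*} [Mul S] {P : Set S} (hP : IsFilt P) {t : S}
    (ht : t ∈ P) :
    upc {r ∈ P | natLe r t} = P := by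
  refine Set.Subset.antisymm (fun s ⟨r, ⟨hr, _⟩, hrs⟩ => hP.2.1 r hr s hrs) fun s hs => ?_
  obtain ⟨r, hr, hrs, hrt⟩ := hP.2.2 s hs t ht
  exact ⟨r, ⟨hr, hrt⟩, hrs⟩

theorem UU_zero {S : Type*} [Mul S] [Zero S] : UU (0 : S) = ∅ :=
  Set.eq_empty_of_forall_notMem fun _ hA => hA.1.2 hA.2

theorem UU_inter_UU {S : Type*} [Mul S] [Zero S] (a b : S) :
    UU a ∩ UU b = {A | ∃ x : S, natLe x a ∧ natLe x b ∧ A ∈ UU x} := by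
  ext A
  constructor
  · rintro ⟨⟨hA, haA⟩, -, hbA⟩
    obtain ⟨c, hc, hca, hcb⟩ := hA.1.2.2 a haA b hbA
    exact ⟨c, hca, hcb, hA, hc⟩
  · rintro ⟨x, hxa, hxb, hA, hxA⟩
    exact ⟨⟨hA, hA.1.2.1 x hxA a hxa⟩, hA, hA.1.2.1 x hxA b hxb⟩

namespace InvSemigroupZero

variable {S : Type*} [Mul S] [Inv S] [Zero S] (hS : InvSemigroupZero S)
include hS

theorem inv_inv (a : S) : a⁻¹⁻¹ = a :=
  (hS.inv_unique a⁻¹ a (hS.inv_mul_inv a) (hS.mul_inv_mul a)).symm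

theorem inv_eq_self_of_isIdem {e : S} (he : IsIdem e) : e⁻¹ = e :=
  (hS.inv_unique e e (by rw [he, he]) (by rw [he, he])).symm

theorem inv_zero : (0 : S)⁻¹ = 0 :=
  (hS.inv_unique 0 0 (by rw [hS.zero_mul, hS.zero_mul]) (by rw [hS.zero_mul, hS.zero_mul])).symm

theorem isIdem_inv_mul (a : S) : IsIdem (a⁻¹ * a) := by
  rw [IsIdem, ← hS.mul_assoc, hS.inv_mul_inv]

theorem isIdem_mul_inv (a : S) : IsIdem (a * a⁻¹) := by
  rw [IsIdem, ← hS.mul_assoc, hS.mul_inv_mul]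

theorem mul_inv_mul' (a : S) : a * (a⁻¹ * a) = a := by
  rw [← hS.mul_assoc, hS.mul_inv_mul]

theorem inv_mul_inv_mul (a t : S) : a⁻¹ * (a * (a⁻¹ * t)) = a⁻¹ * t := by
  rw [← hS.mul_assoc, ← hS.mul_assoc, hS.inv_mul_inv]

theorem mul_mul_of_isIdem {e : S} (he : IsIdem e) (t : S) : e * (e * t) = e * t := by
  rw [← hS.mul_assoc, he]

theorem isIdem_mul {e f : S} (he : IsIdem e) (hf : IsIdem f) : IsIdem (e * f) := by
  -- `f (ef)⁻¹ e` is an inverse of `ef`, hence equal to `(ef)⁻¹`; it is visibly idempotent.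
  have hinv : f * ((e * f)⁻¹ * e) = (e * f)⁻¹ := by
    refine hS.inv_unique (e * f) _ ?_ ?_ <;> simp only [hS.mul_assoc] <;>
      rw [hS.mul_mul_of_isIdem he, hS.mul_mul_of_isIdem hf, ← hS.mul_assoc e f]
    · exact hS.mul_inv_mul' (e * f)
    · rw [hS.inv_mul_inv_mul]
  have hidem : IsIdem (e * f)⁻¹ := by
    rw [IsIdem, ← hinv]
    simp only [hS.mul_assoc]
    rw [← hS.mul_assoc e f, hS.inv_mul_inv_mul]
  rwa [← hS.inv_eq_self_of_isIdem hidem, hS.inv_inv] at hidem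

theorem mul_comm_of_isIdem {e f : S} (he : IsIdem e) (hf : IsIdem f) : e * f = f * e := by
  -- `ef` and `fe` are mutually inverse.
  have h := hS.inv_unique (e * f) (f * e) ?_ ?_
  · rwa [hS.inv_eq_self_of_isIdem (hS.isIdem_mul he hf), eq_comm] at h
  · simp only [hS.mul_assoc]
    rw [hS.mul_mul_of_isIdem hf, hS.mul_mul_of_isIdem he, ← hS.mul_assoc e f,
      hS.isIdem_mul he hf]
  · simp only [hS.mul_assoc]
    rw [hS.mul_mul_of_isIdem he, hS.mul_mul_of_isIdem hf, ← hS.mul_assoc f e,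
      hS.isIdem_mul hf he]

theorem mul_left_comm_of_isIdem {e f : S} (he : IsIdem e) (hf : IsIdem f) (t : S) :
    e * (f * t) = f * (e * t) := by
  rw [← hS.mul_assoc, hS.mul_comm_of_isIdem he hf, hS.mul_assoc]

theorem mul_mul_self_of_isIdem {e f : S} (he : IsIdem e) (hf : IsIdem f) :
    e * (f * e) = e * f := by
  rw [hS.mul_comm_of_isIdem hf he, hS.mul_mul_of_isIdem he]

theorem mul_inv_mul_idem_mul {e : S} (he : IsIdem e) (b : S) : b * (b⁻¹ * (e * b)) = e * b := by
  rw [← hS.mul_assoc, hS.mul_left_comm_of_isIdem (hS.isIdem_mul_inv b) he, hS.mul_inv_mul]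

theorem mul_inv_rev (a b : S) : (a * b)⁻¹ = b⁻¹ * a⁻¹ := by
  refine (hS.inv_unique (a * b) (b⁻¹ * a⁻¹) ?_ ?_).symm <;> simp only [hS.mul_assoc]
  · rw [← hS.mul_assoc a⁻¹ a b, hS.mul_inv_mul_idem_mul (hS.isIdem_inv_mul a) b,
      ← hS.mul_assoc a, ← hS.mul_assoc, hS.mul_inv_mul]
  · rw [← hS.mul_assoc a⁻¹ a, ← hS.mul_assoc b,
      hS.mul_left_comm_of_isIdem (hS.isIdem_inv_mul a) (hS.isIdem_mul_inv b) a⁻¹,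
      hS.inv_mul_inv, ← hS.mul_assoc, ← hS.mul_assoc b⁻¹, hS.inv_mul_inv]

theorem isIdem_inv_mul_mul {e : S} (he : IsIdem e) (b : S) : IsIdem (b⁻¹ * (e * b)) := by
  rw [IsIdem]
  simp only [hS.mul_assoc]
  rw [hS.mul_inv_mul_idem_mul he b, hS.mul_mul_of_isIdem he]

theorem isIdem_mul_mul_inv {e : S} (he : IsIdem e) (b : S) : IsIdem (b * (e * b⁻¹)) := by
  simpa only [hS.inv_inv] using hS.isIdem_inv_mul_mul he b⁻¹

theorem natLe_refl (s : S) : natLe s s := ⟨s⁻¹ * s, hS.isIdem_inv_mul s, (hS.mul_inv_mul' s).symm⟩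

theorem natLe_trans {s t u : S} (hst : natLe s t) (htu : natLe t u) : natLe s u := by
  obtain ⟨e, he, rfl⟩ := hst
  obtain ⟨f, hf, rfl⟩ := htu
  exact ⟨f * e, hS.isIdem_mul hf he, hS.mul_assoc u f e⟩

theorem natLe_iff_exists_idem_mul {s t : S} : natLe s t ↔ ∃ e, IsIdem e ∧ s = e * t := by
  constructor
  · rintro ⟨e, he, rfl⟩
    refine ⟨t * (e * t⁻¹), hS.isIdem_mul_mul_inv he t, ?_⟩
    simp only [hS.mul_assoc]
    rw [hS.mul_comm_of_isIdem he (hS.isIdem_inv_mul t), ← hS.mul_assoc t, hS.mul_inv_mul']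
  · rintro ⟨e, he, rfl⟩
    exact ⟨t⁻¹ * (e * t), hS.isIdem_inv_mul_mul he t, (hS.mul_inv_mul_idem_mul he t).symm⟩

theorem natLe_idem_mul {e : S} (he : IsIdem e) (t : S) : natLe (e * t) t :=
  hS.natLe_iff_exists_idem_mul.mpr ⟨e, he, rfl⟩

theorem natLe_inv {s t : S} (h : natLe s t) : natLe s⁻¹ t⁻¹ := by
  obtain ⟨e, he, rfl⟩ := h
  rw [hS.mul_inv_rev, hS.inv_eq_self_of_isIdem he]
  exact hS.natLe_idem_mul he t⁻¹

theorem natLe_mul_left {s t : S} (h : natLe s t) (u : S) : natLe (u * s) (u * t) := by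
  obtain ⟨e, he, rfl⟩ := h
  exact ⟨e, he, (hS.mul_assoc u t e).symm⟩

theorem natLe_mul {s t u v : S} (hst : natLe s t) (huv : natLe u v) : natLe (s * u) (t * v) := by
  obtain ⟨e, he, rfl⟩ := hst
  obtain ⟨f, hf, rfl⟩ := hS.natLe_iff_exists_idem_mul.mp huv
  rw [show t * e * (f * v) = t * (e * f * v) by simp only [hS.mul_assoc]]
  exact hS.natLe_mul_left (hS.natLe_idem_mul (hS.isIdem_mul he hf) v) t

theorem eq_zero_of_natLe_zero {s : S} (h : natLe s 0) : s = 0 := by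
  obtain ⟨e, -, rfl⟩ := h
  exact hS.zero_mul e

theorem isIdem_of_natLe {s e : S} (h : natLe s e) (he : IsIdem e) : IsIdem s := by
  obtain ⟨f, hf, rfl⟩ := h
  exact hS.isIdem_mul he hf

theorem mul_inv_mul_of_natLe {r t : S} (h : natLe r t) : r * (t⁻¹ * r) = r := by
  obtain ⟨e, he, rfl⟩ := h
  simp only [hS.mul_assoc]
  rw [← hS.mul_assoc t⁻¹ t e, hS.mul_left_comm_of_isIdem he (hS.isIdem_inv_mul t) e, he,
    ← hS.mul_assoc t, hS.mul_inv_mul']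

theorem mul_inv_mul_inv_mul_of_natLe_mul {r a b : S} (h : natLe r (a * b)) :
    r * b⁻¹ * (a⁻¹ * r) = r := by
  rw [hS.mul_assoc, ← hS.mul_assoc b⁻¹, ← hS.mul_inv_rev, hS.mul_inv_mul_of_natLe h]

theorem inv_mul_mul_inv_eq_of_natLe_mul {r a b : S} (h : natLe r (a * b)) :
    a⁻¹ * r * (a⁻¹ * r)⁻¹ = (r * b⁻¹)⁻¹ * (r * b⁻¹) := by
  obtain ⟨g, hg, rfl⟩ := h
  -- with `E = a⁻¹a` and `F = bgb⁻¹`, the two sides are `EFE` and `FEF`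
  have hE := hS.isIdem_inv_mul a
  have hF := hS.isIdem_mul_mul_inv hg b
  have lhs : a⁻¹ * (a * b * g) * (a⁻¹ * (a * b * g))⁻¹ =
      a⁻¹ * a * (b * (g * b⁻¹) * (a⁻¹ * a)) := by
    simp only [hS.mul_inv_rev, hS.inv_inv, hS.inv_eq_self_of_isIdem hg, hS.mul_assoc]
    rw [hS.mul_mul_of_isIdem hg]
  have rhs : (a * b * g * b⁻¹)⁻¹ * (a * b * g * b⁻¹) =
      b * (g * b⁻¹) * (a⁻¹ * a * (b * (g * b⁻¹))) := by
    simp only [hS.mul_inv_rev, hS.inv_inv, hS.inv_eq_self_of_isIdem hg, hS.mul_assoc]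
  rw [lhs, rhs, hS.mul_mul_self_of_isIdem hE hF, hS.mul_mul_self_of_isIdem hF hE,
    hS.mul_comm_of_isIdem hE hF]

theorem subset_upc (X : Set S) : X ⊆ upc X := fun x hx => ⟨x, hx, hS.natLe_refl x⟩

theorem upc_subset_upc {X Y : Set S} (h : ∀ y ∈ Y, ∃ x ∈ X, natLe x y) : upc Y ⊆ upc X := by
  rintro s ⟨y, hy, hys⟩
  obtain ⟨x, hx, hxy⟩ := h y hy
  exact ⟨x, hx, hS.natLe_trans hxy hys⟩

theorem upc_eq_of_isFilt {A : Set S} (hA : IsFilt A) : upc A = A :=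
  Set.Subset.antisymm (fun _ ⟨_, hx, hxs⟩ => hA.2.1 _ hx _ hxs) (hS.subset_upc A)

theorem exists_natLe_three {A : Set S} (hA : IsFilt A) {x y z : S} (hx : x ∈ A) (hy : y ∈ A)
    (hz : z ∈ A) : ∃ c ∈ A, natLe c x ∧ natLe c y ∧ natLe c z := by
  obtain ⟨d, hd, hdx, hdy⟩ := hA.2.2 x hx y hy
  obtain ⟨c, hc, hcd, hcz⟩ := hA.2.2 d hd z hz
  exact ⟨c, hc, hS.natLe_trans hcd hdx, hS.natLe_trans hcd hdy, hcz⟩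

theorem directedOn_setOf_natLe {P : Set S} (hP : IsFilt P) (t : S) :
    DirectedOn (flip natLe) {r ∈ P | natLe r t} := by
  rintro x ⟨hx, hxt⟩ y ⟨hy, -⟩
  obtain ⟨z, hz, hzx, hzy⟩ := hP.2.2 x hx y hy
  exact ⟨z, ⟨hz, hS.natLe_trans hzx hxt⟩, hzx, hzy⟩

theorem isPFilt_upc {X : Set S} (hne : X.Nonempty) (hdir : DirectedOn (flip natLe) X)
    (h0 : (0 : S) ∉ X) : IsPFilt (upc X) := by
  refine ⟨⟨hne.mono (hS.subset_upc X), ?_, ?_⟩, ?_⟩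
  · rintro s ⟨x, hx, hxs⟩ t hst
    exact ⟨x, hx, hS.natLe_trans hxs hst⟩
  · rintro s ⟨x, hx, hxs⟩ t ⟨y, hy, hyt⟩
    obtain ⟨z, hz, hzx, hzy⟩ := hdir x hx y hy
    exact ⟨z, hS.subset_upc X hz, hS.natLe_trans hzx hxs, hS.natLe_trans hzy hyt⟩
  · rintro ⟨x, hx, hx0⟩
    exact h0 (hS.eq_zero_of_natLe_zero hx0 ▸ hx)

theorem upc_setOf_pairs_eq {D : Set S} (hD : DirectedOn (flip natLe) D) {f g : S → S}
    (hf : ∀ ⦃x y⦄, natLe x y → natLe (f x) (f y)) (hg : ∀ ⦃x y⦄, natLe x y → natLe (g x) (g y))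
    {m : S → S → S} (hm : ∀ ⦃x x' y y'⦄, natLe x x' → natLe y y' → natLe (m x y) (m x' y')) :
    upc {p | ∃ x ∈ upc (f '' D), ∃ y ∈ upc (g '' D), p = m x y} =
      upc ((fun d => m (f d) (g d)) '' D) := by
  refine (hS.upc_subset_upc ?_).antisymm (hS.upc_subset_upc ?_)
  · rintro _ ⟨x, ⟨_, ⟨d₁, hd₁, rfl⟩, hx⟩, y, ⟨_, ⟨d₂, hd₂, rfl⟩, hy⟩, rfl⟩
    obtain ⟨d, hd, hdd₁, hdd₂⟩ := hD d₁ hd₁ d₂ hd₂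
    exact ⟨_, ⟨d, hd, rfl⟩, hm (hS.natLe_trans (hf hdd₁) hx) (hS.natLe_trans (hg hdd₂) hy)⟩
  · rintro _ ⟨d, hd, rfl⟩
    exact ⟨_, ⟨f d, hS.subset_upc _ ⟨d, hd, rfl⟩, g d, hS.subset_upc _ ⟨d, hd, rfl⟩, rfl⟩,
      hS.natLe_refl _⟩

theorem dF_eq_upc_image {A : Set S} (hA : IsFilt A) :
    dF A = upc ((fun x => x⁻¹ * x) '' A) := by
  have h := hS.upc_setOf_pairs_eq hA.directedOn (f := id) (g := id) (fun _ _ h => h)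
    (fun _ _ h => h) (m := fun x y => x⁻¹ * y)
    (fun _ _ _ _ hx hy => hS.natLe_mul (hS.natLe_inv hx) hy)
  rwa [Set.image_id, hS.upc_eq_of_isFilt hA] at h

theorem isPFilt_dF {A : Set S} (hA : IsPFilt A) : IsPFilt (dF A) := by
  rw [hS.dF_eq_upc_image hA.1]
  refine hS.isPFilt_upc (hA.1.1.image _)
    (hA.1.directedOn.mono_comp fun _ _ h => hS.natLe_mul (hS.natLe_inv h) h) ?_
  rintro ⟨x, hx, hx0 : x⁻¹ * x = 0⟩
  refine hA.ne_zero hx ?_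
  rw [← hS.mul_inv_mul' x, hx0, hS.mul_zero]

theorem mem_invF {A : Set S} {x : S} : x ∈ invF A ↔ x⁻¹ ∈ A := by
  rw [invF, Set.image_eq_preimage_of_inverse hS.inv_inv hS.inv_inv, Set.mem_preimage]

theorem invF_invF (A : Set S) : invF (invF A) = A := by
  ext x
  rw [hS.mem_invF, hS.mem_invF, hS.inv_inv]

theorem isPFilt_invF {A : Set S} (hA : IsPFilt A) : IsPFilt (invF A) := by
  obtain ⟨⟨⟨a, ha⟩, hup, hdir⟩, h0⟩ := hA
  refine ⟨⟨⟨a⁻¹, by rwa [hS.mem_invF, hS.inv_inv]⟩, ?_, ?_⟩, ?_⟩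
  · intro s hs t hst
    rw [hS.mem_invF] at hs ⊢
    exact hup _ hs _ (hS.natLe_inv hst)
  · intro s hs t ht
    obtain ⟨c, hc, hcs, hct⟩ := hdir _ (hS.mem_invF.mp hs) _ (hS.mem_invF.mp ht)
    refine ⟨c⁻¹, by rwa [hS.mem_invF, hS.inv_inv], ?_, ?_⟩
    · simpa only [hS.inv_inv] using hS.natLe_inv hcs
    · simpa only [hS.inv_inv] using hS.natLe_inv hct
  · rwa [hS.mem_invF, hS.inv_zero]

theorem invF_mem_UU {A : Set S} {a : S} (hA : A ∈ UU a) : invF A ∈ UU a⁻¹ :=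
  ⟨hS.isPFilt_invF hA.1, by rw [hS.mem_invF, hS.inv_inv]; exact hA.2⟩

theorem image_invF_UU (a : S) : invF '' UU a = UU a⁻¹ := by
  refine (Set.image_subset_iff.mpr fun A => hS.invF_mem_UU).antisymm fun B hB => ?_
  refine ⟨invF B, ?_, hS.invF_invF B⟩
  simpa only [hS.inv_inv] using hS.invF_mem_UU hB

theorem rF_eq_dF_invF (A : Set S) : rF A = dF (invF A) := by
  refine congrArg upc (Set.ext fun p => ⟨?_, ?_⟩)
  · rintro ⟨a, ha, b, hb, rfl⟩
    exact ⟨a⁻¹, by rwa [hS.mem_invF, hS.inv_inv], b⁻¹, by rwa [hS.mem_invF, hS.inv_inv],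
      by rw [hS.inv_inv]⟩
  · rintro ⟨a, ha, b, hb, rfl⟩
    exact ⟨a⁻¹, hS.mem_invF.mp ha, b⁻¹, hS.mem_invF.mp hb, by rw [hS.inv_inv]⟩

theorem isPFilt_rF {A : Set S} (hA : IsPFilt A) : IsPFilt (rF A) := by
  rw [hS.rF_eq_dF_invF]
  exact hS.isPFilt_dF (hS.isPFilt_invF hA)

theorem isPFilt_mulF {A B : Set S} (hA : IsPFilt A) (hB : IsPFilt B) (hd : dF A = rF B) :
    IsPFilt (mulF A B) := by
  obtain ⟨a, ha⟩ := hA.1.1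
  obtain ⟨b, hb⟩ := hB.1.1
  refine hS.isPFilt_upc ⟨_, a, ha, b, hb, rfl⟩ ?_ ?_
  · rintro _ ⟨x₁, hx₁, y₁, hy₁, rfl⟩ _ ⟨x₂, hx₂, y₂, hy₂, rfl⟩
    obtain ⟨x, hx, hxx₁, hxx₂⟩ := hA.1.2.2 x₁ hx₁ x₂ hx₂
    obtain ⟨y, hy, hyy₁, hyy₂⟩ := hB.1.2.2 y₁ hy₁ y₂ hy₂
    exact ⟨x * y, ⟨x, hx, y, hy, rfl⟩, hS.natLe_mul hxx₁ hyy₁, hS.natLe_mul hxx₂ hyy₂⟩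
  · rintro ⟨x, hx, y, hy, hxy⟩
    -- `x⁻¹x` and `yy⁻¹` lie in the proper filter `r(B)`, yet their product `x⁻¹(xy)y⁻¹` is `0`.
    have hrB := hS.isPFilt_rF hB
    have hx' : x⁻¹ * x ∈ rF B := hd ▸ hS.subset_upc _ ⟨x, hx, x, hx, rfl⟩
    have hy' : y * y⁻¹ ∈ rF B := hS.subset_upc _ ⟨y, hy, y, hy, rfl⟩
    obtain ⟨c, hc, hcx, hcy⟩ := hrB.1.2.2 _ hx' _ hy'
    refine hrB.ne_zero hc (hS.eq_zero_of_natLe_zero ?_)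
    have h := hS.natLe_mul hcx hcy
    rwa [hS.isIdem_of_natLe hcx (hS.isIdem_inv_mul x), hS.mul_assoc, ← hS.mul_assoc x,
      ← hxy, hS.zero_mul, hS.mul_zero] at h

theorem prodUU_subset_UU_mul (a b : S) : prodUU (UU a) (UU b) ⊆ UU (a * b) := by
  rintro _ ⟨A, ⟨hA, ha⟩, B, ⟨hB, hb⟩, hd, rfl⟩
  exact ⟨hS.isPFilt_mulF hA hB hd, hS.subset_upc _ ⟨a, ha, b, hb, rfl⟩⟩

theorem UU_mul_subset_prodUU (a b : S) : UU (a * b) ⊆ prodUU (UU a) (UU b) := by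
  rintro P ⟨hP, hab⟩
  set D := {r ∈ P | natLe r (a * b)}
  have hD := hS.directedOn_setOf_natLe hP.1 (a * b)
  have habD : a * b ∈ D := ⟨hab, hS.natLe_refl _⟩
  have hsplit : ∀ r ∈ D, r * b⁻¹ * (a⁻¹ * r) = r :=
    fun r hr => hS.mul_inv_mul_inv_mul_of_natLe_mul hr.2
  have hf : ∀ ⦃x y : S⦄, natLe x y → natLe (x * b⁻¹) (y * b⁻¹) :=
    fun _ _ h => hS.natLe_mul h (hS.natLe_refl _)
  have hg : ∀ ⦃x y : S⦄, natLe x y → natLe (a⁻¹ * x) (a⁻¹ * y) :=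
    fun _ _ h => hS.natLe_mul_left h _
  refine ⟨upc ((· * b⁻¹) '' D), ⟨?_, ?_⟩, upc ((a⁻¹ * ·) '' D), ⟨?_, ?_⟩, ?_, ?_⟩
  · refine hS.isPFilt_upc ⟨_, a * b, habD, rfl⟩ (hD.mono_comp fun _ _ h => hf h) ?_
    rintro ⟨r, hr, hr0 : r * b⁻¹ = 0⟩
    refine hP.ne_zero hr.1 ?_
    rw [← hsplit r hr, hr0, hS.zero_mul]
  · exact ⟨_, ⟨a * b, habD, rfl⟩, b * b⁻¹, hS.isIdem_mul_inv b, hS.mul_assoc a b b⁻¹⟩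
  · refine hS.isPFilt_upc ⟨_, a * b, habD, rfl⟩ (hD.mono_comp fun _ _ h => hg h) ?_
    rintro ⟨r, hr, hr0 : a⁻¹ * r = 0⟩
    refine hP.ne_zero hr.1 ?_
    rw [← hsplit r hr, hr0, hS.mul_zero]
  · refine ⟨_, ⟨a * b, habD, rfl⟩, ?_⟩
    show natLe (a⁻¹ * (a * b)) b
    rw [← hS.mul_assoc]
    exact hS.natLe_idem_mul (hS.isIdem_inv_mul a) b
  · calc dF (upc ((· * b⁻¹) '' D))
        = upc ((fun r => (r * b⁻¹)⁻¹ * (r * b⁻¹)) '' D) :=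
          hS.upc_setOf_pairs_eq hD hf hf fun _ _ _ _ hx hy => hS.natLe_mul (hS.natLe_inv hx) hy
      _ = upc ((fun r => a⁻¹ * r * (a⁻¹ * r)⁻¹) '' D) := by
          rw [Set.image_congr fun r hr => (hS.inv_mul_mul_inv_eq_of_natLe_mul hr.2).symm]
      _ = rF (upc ((a⁻¹ * ·) '' D)) :=
          (hS.upc_setOf_pairs_eq hD hg hg fun _ _ _ _ hx hy =>
            hS.natLe_mul hx (hS.natLe_inv hy)).symm
  · calc P = upc D := (hP.1.upc_setOf_natLe_eq hab).symm
      _ = upc ((fun r => r * b⁻¹ * (a⁻¹ * r)) '' D) := by rw [Set.image_congr hsplit, Set.image_id']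
      _ = mulF (upc ((· * b⁻¹) '' D)) (upc ((a⁻¹ * ·) '' D)) :=
          (hS.upc_setOf_pairs_eq hD hf hg fun _ _ _ _ hx hy => hS.natLe_mul hx hy).symm

theorem subset_of_dF_eq {A B : Set S} (hB : IsFilt B) {a : S} (haA : a ∈ A) (haB : a ∈ B)
    (hd : dF A = dF B) : A ⊆ B := by
  intro x hx
  obtain ⟨_, ⟨u, hu, v, hv, rfl⟩, huv⟩ : a⁻¹ * x ∈ dF B :=
    hd ▸ hS.subset_upc _ ⟨a, haA, x, hx, rfl⟩
  obtain ⟨c, hc, hca, hcu, hcv⟩ := hS.exists_natLe_three hB haB hu hv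
  -- `c = c(c⁻¹c) ≤ c(u⁻¹v) ≤ a(a⁻¹x) ≤ x`
  have h₁ : natLe c (c * (u⁻¹ * v)) := by
    simpa only [hS.mul_inv_mul'] using
      hS.natLe_mul_left (hS.natLe_mul (hS.natLe_inv hcu) hcv) c
  have h₂ : natLe (c * (u⁻¹ * v)) (a * (a⁻¹ * x)) := hS.natLe_mul hca huv
  have h₃ : natLe (a * (a⁻¹ * x)) x := by
    rw [← hS.mul_assoc]
    exact hS.natLe_idem_mul (hS.isIdem_mul_inv a) x
  exact hB.2.1 c hc x (hS.natLe_trans h₁ (hS.natLe_trans h₂ h₃))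

theorem eq_of_dF_eq {a : S} {A B : Set S} (hA : A ∈ UU a) (hB : B ∈ UU a) (hd : dF A = dF B) :
    A = B :=
  (hS.subset_of_dF_eq hB.1.1 hA.2 hB.2 hd).antisymm (hS.subset_of_dF_eq hA.1.1 hB.2 hA.2 hd.symm)

theorem eq_of_rF_eq {a : S} {A B : Set S} (hA : A ∈ UU a) (hB : B ∈ UU a) (hr : rF A = rF B) :
    A = B := by
  rw [hS.rF_eq_dF_invF, hS.rF_eq_dF_invF] at hr
  rw [← hS.invF_invF A, hS.eq_of_dF_eq (hS.invF_mem_UU hA) (hS.invF_mem_UU hB) hr,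
    hS.invF_invF]

end InvSemigroupZero

/-- Properties of the sets `U_a` in the groupoid of proper filters:
`U_0 = ∅`, `U_a⁻¹ = U_{a⁻¹}`, `U_a U_b = U_{ab}`, each `U_a` is a partial
bisection, and `U_a ∩ U_b = ⋃_{x ≤ a,b} U_x`. -/
theorem U_sets_properties {S : Type*} [Mul S] [Inv S] [Zero S]
    (hS : InvSemigroupZero S) (a b : S) :
    UU (0 : S) = ∅ ∧
    invF '' UU a = UU a⁻¹ ∧
    prodUU (UU a) (UU b) = UU (a * b) ∧
    (∀ A ∈ UU a, ∀ B ∈ UU a, (dF A = dF B → A = B) ∧ (rF A = rF B → A = B)) ∧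
    UU a ∩ UU b = {A | ∃ x : S, natLe x a ∧ natLe x b ∧ A ∈ UU x} :=
  ⟨UU_zero, hS.image_invF_UU a,
    (hS.prodUU_subset_UU_mul a b).antisymm (hS.UU_mul_subset_prodUU a b),
    fun _ hA _ hB => ⟨hS.eq_of_dF_eq hA hB, hS.eq_of_rF_eq hA hB⟩, UU_inter_UU a b⟩
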